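/- Let $F$ be an admissible generalised quadratic form over $\mathfrak{o}$, i.e. there exist vectors $\mathbf{v}_1,\dots,\mathbf{v}_n\in K^n$ such that $B(\mathbf{v}_i;\mathbf{h})=0$ for all $i$ forces $\mathbf{h}=\mathbf{0}$. Then there exists a constant $C_2>0$, depending only on $F$, such that for every non-zero integral ideal $\mathfrak{b}$ one has $|\mathcal{H}_\mathfrak{b}/({}^{G}\mathfrak{b})^n|\leq C_2\,(\mathrm{N}\,{}^{G}\mathfrak{b})^{n}/(\mathrm{N}\mathfrak{b})^{n}$. -/

import Mathlib

open NumberField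
open scoped BigOperators

/-- The action of `Gal(K/ℚ)` on the ring of integers of `K`. -/
noncomputable def gact (K : Type*) [Field K] [NumberField K]
    (τ : K ≃ₐ[ℚ] K) : (𝓞 K) ≃ₐ[ℤ] (𝓞 K) :=
  galRestrict ℤ ℚ K (𝓞 K) τ

/-- The generalised quadratic form attached to a symmetric coefficient tuple
`c : Fin n → Fin n → Gal(K/ℚ) → Gal(K/ℚ) → 𝓞 K`. -/
noncomputable def gqf {K : Type*} [Field K] [NumberField K] {n : ℕ}
    (c : Fin n → Fin n → (K ≃ₐ[ℚ] K) → (K ≃ₐ[ℚ] K) → 𝓞 K)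
    (x : Fin n → 𝓞 K) : 𝓞 K :=
  ∑ i, ∑ j, ∑ τ : K ≃ₐ[ℚ] K, ∑ τ' : K ≃ₐ[ℚ] K,
    c i j τ τ' * gact K τ (x i) * gact K τ' (x j)

/-- The generalised bilinear form attached to `c`. -/
noncomputable def gbf {K : Type*} [Field K] [NumberField K] {n : ℕ}
    (c : Fin n → Fin n → (K ≃ₐ[ℚ] K) → (K ≃ₐ[ℚ] K) → 𝓞 K)
    (x y : Fin n → 𝓞 K) : 𝓞 K :=
  ∑ i, ∑ j, ∑ τ : K ≃ₐ[ℚ] K, ∑ τ' : K ≃ₐ[ℚ] K,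
    c i j τ τ' * gact K τ (x i) * gact K τ' (y j)

/-- The `G`-invariant ideal `ᴳ𝔟 = ⋂_{τ ∈ G} 𝔟^{τ⁻¹}`. -/
noncomputable def GIdeal {K : Type*} [Field K] [NumberField K]
    (G : Set (K ≃ₐ[ℚ] K)) (𝔟 : Ideal (𝓞 K)) : Ideal (𝓞 K) :=
  ⨅ τ ∈ G, Ideal.map (gact K τ.symm) 𝔟

lemma gbf_add_right {K : Type*} [Field K] [NumberField K] {n : ℕ}
    (c : Fin n → Fin n → (K ≃ₐ[ℚ] K) → (K ≃ₐ[ℚ] K) → 𝓞 K)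
    (a x y : Fin n → 𝓞 K) : gbf c a (x + y) = gbf c a x + gbf c a y := by
  simp [gbf, Pi.add_apply, map_add, mul_add, Finset.sum_add_distrib]

lemma gbf_neg_right {K : Type*} [Field K] [NumberField K] {n : ℕ}
    (c : Fin n → Fin n → (K ≃ₐ[ℚ] K) → (K ≃ₐ[ℚ] K) → 𝓞 K)
    (a x : Fin n → 𝓞 K) : gbf c a (-x) = - gbf c a x := by
  simp [gbf, Pi.neg_apply, map_neg, mul_neg, Finset.sum_neg_distrib]

/-- The subgroup `ℋ_𝔟 = {h ∈ 𝓞ⁿ : 2 B(a; h) ∈ 𝔟 ∀ a}`. -/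
noncomputable def Hsub {K : Type*} [Field K] [NumberField K] {n : ℕ}
    (c : Fin n → Fin n → (K ≃ₐ[ℚ] K) → (K ≃ₐ[ℚ] K) → 𝓞 K)
    (𝔟 : Ideal (𝓞 K)) : AddSubgroup (Fin n → 𝓞 K) where
  carrier := {h | ∀ a, 2 * gbf c a h ∈ 𝔟}
  zero_mem' := by
    intro a
    have : gbf c a (0 : Fin n → 𝓞 K) = 0 := by
      simp [gbf]
    simp [this]
  add_mem' := by
    intro x y hx hy a
    rw [gbf_add_right, mul_add]
    exact Ideal.add_mem _ (hx a) (hy a)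
  neg_mem' := by
    intro x hx a
    rw [gbf_neg_right, mul_neg]
    exact (Ideal.neg_mem_iff _).mpr (hx a)

/-- The subgroup `(ᴳ𝔟)ⁿ ⊆ 𝓞ⁿ`. -/
noncomputable def GIdealPow {K : Type*} [Field K] [NumberField K] (n : ℕ)
    (G : Set (K ≃ₐ[ℚ] K)) (𝔟 : Ideal (𝓞 K)) : AddSubgroup (Fin n → 𝓞 K) :=
  AddSubgroup.pi Set.univ fun _ => (GIdeal G 𝔟).toAddSubgroup

/-- The generalised bilinear form extended to `Kⁿ`. -/
noncomputable def gbfK {K : Type*} [Field K] [NumberField K] {n : ℕ}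
    (c : Fin n → Fin n → (K ≃ₐ[ℚ] K) → (K ≃ₐ[ℚ] K) → 𝓞 K)
    (x y : Fin n → K) : K :=
  ∑ i, ∑ j, ∑ τ : K ≃ₐ[ℚ] K, ∑ τ' : K ≃ₐ[ℚ] K,
    (c i j τ τ' : K) * τ (x i) * τ' (y j)

/-! Clearing denominators in the admissible vectors gives `W₁, …, Wₙ ∈ 𝓞ⁿ` for which
`L : h ↦ (2 B(Wᵢ; h))ᵢ` is an injective additive endomorphism of the lattice `𝓞ⁿ`, so
`C₂ := [𝓞ⁿ : L 𝓞ⁿ]` is finite. Since `ℋ_𝔟 ⊆ L⁻¹(𝔟ⁿ)`,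
`(N𝔟)ⁿ = [𝓞ⁿ : 𝔟ⁿ]` divides `[𝓞ⁿ : L⁻¹(𝔟ⁿ)] · C₂`, hence `[𝓞ⁿ : ℋ_𝔟] · C₂`, and multiplying by
`|ℋ_𝔟/(ᴳ𝔟)ⁿ|` turns `[𝓞ⁿ : ℋ_𝔟]` into `[𝓞ⁿ : (ᴳ𝔟)ⁿ] = (N ᴳ𝔟)ⁿ`. -/

theorem AddSubgroup.index_dvd_index_comap_mul_index_range {G G' : Type*} [AddGroup G]
    [AddGroup G'] (f : G →+ G') (B : AddSubgroup G') :
    B.index ∣ (B.comap f).index * f.range.index := by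
  have h := AddSubgroup.relIndex_inf_mul_relIndex B f.range ⊤
  rw [inf_top_eq, AddSubgroup.relIndex_top_right, AddSubgroup.relIndex_top_right,
    ← AddSubgroup.index_comap] at h
  exact h ▸ AddSubgroup.index_dvd_of_le inf_le_left

theorem AddMonoidHom.index_range_ne_zero_of_injective {M : Type*} [AddCommGroup M]
    [Module.Free ℤ M] [Module.Finite ℤ M] {f : M →+ M} (hf : Function.Injective f) :
    f.range.index ≠ 0 :=
  have := Submodule.finiteQuotientOfFreeOfRankEq _
    (LinearMap.finrank_range_of_inj (f := f.toIntLinearMap) hf)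
  AddSubgroup.index_ne_zero_of_finite (H := f.toIntLinearMap.range.toAddSubgroup) (hH := this)

theorem Ideal.index_pi_toAddSubgroup {S ι : Type*} [CommRing S]
    [IsDedekindDomain S] [Module.Free ℤ S] [Module.Finite ℤ S] [Fintype ι] (I : Ideal S) :
    (AddSubgroup.pi Set.univ fun _ : ι => I.toAddSubgroup).index =
      Ideal.absNorm I ^ Fintype.card ι := by
  rw [AddSubgroup.index_pi, ← Ideal.absNorm_eq_index, Finset.prod_const, Finset.card_univ]

section
variable {K : Type*} [Field K] [NumberField K]

lemma gact_symm (τ : K ≃ₐ[ℚ] K) : gact K τ.symm = (gact K τ).symm :=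
  map_inv (galRestrict ℤ ℚ K (𝓞 K)) τ

lemma mem_GIdeal_iff {G : Set (K ≃ₐ[ℚ] K)} {𝔟 : Ideal (𝓞 K)} {x : 𝓞 K} :
    x ∈ GIdeal G 𝔟 ↔ ∀ τ ∈ G, gact K τ x ∈ 𝔟 := by
  simp only [GIdeal, Ideal.mem_iInf, gact_symm]
  refine forall₂_congr fun τ _ => ?_
  simp only [Ideal.mem_map_of_equiv, AlgEquiv.symm_apply_eq, exists_eq_right]

lemma GIdeal_ne_bot (G : Set (K ≃ₐ[ℚ] K)) {𝔟 : Ideal (𝓞 K)} (h𝔟 : 𝔟 ≠ ⊥) :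
    GIdeal G 𝔟 ≠ ⊥ := by
  have hprod : ∏ τ : K ≃ₐ[ℚ] K, Ideal.map (gact K τ.symm) 𝔟 ≤ GIdeal G 𝔟 :=
    le_iInf₂ fun τ _ => Ideal.prod_le_inf.trans (Finset.inf_le (Finset.mem_univ τ))
  refine ne_bot_of_le_ne_bot ?_ hprod
  rw [← Ideal.zero_eq_bot, Finset.prod_ne_zero_iff]
  exact fun τ _ => (Ideal.map_eq_bot_iff_of_injective (gact K τ.symm).injective).not.mpr h𝔟

end

section
variable {K : Type*} [Field K] [NumberField K] {n : ℕ}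
  {c : Fin n → Fin n → (K ≃ₐ[ℚ] K) → (K ≃ₐ[ℚ] K) → 𝓞 K}

lemma algebraMap_gbf (x y : Fin n → 𝓞 K) :
    algebraMap (𝓞 K) K (gbf c x y) =
      gbfK c (fun i => algebraMap (𝓞 K) K (x i)) (fun j => algebraMap (𝓞 K) K (y j)) := by
  simp only [gbf, gbfK, map_sum, map_mul, gact, algebraMap_galRestrict_apply]

lemma gbfK_zsmul_left (m : ℤ) (x y : Fin n → K) : gbfK c (m • x) y = m • gbfK c x y := by
  simp only [gbfK, Finset.smul_sum, Pi.smul_apply, map_zsmul, smul_mul_assoc, mul_smul_comm]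

lemma GIdealPow_le_Hsub {G : Set (K ≃ₐ[ℚ] K)} (hG : ∀ i j τ τ', c i j τ τ' ≠ 0 → τ' ∈ G)
    (𝔟 : Ideal (𝓞 K)) : GIdealPow n G 𝔟 ≤ Hsub c 𝔟 := by
  intro h hh a
  refine Ideal.mul_mem_left _ 2 <| Ideal.sum_mem _ fun i _ => Ideal.sum_mem _ fun j _ =>
    Ideal.sum_mem _ fun τ _ => Ideal.sum_mem _ fun τ' _ => ?_
  by_cases hc : c i j τ τ' = 0
  · simp [hc]
  · exact Ideal.mul_mem_left _ _ (mem_GIdeal_iff.mp (hh j (Set.mem_univ j)) τ' (hG i j τ τ' hc))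

lemma exists_integral_vectors_of_admissible {v : Fin n → Fin n → K}
    (hadm : ∀ h : Fin n → K, (∀ i, gbfK c (v i) h = 0) → h = 0) :
    ∃ W : Fin n → Fin n → 𝓞 K, ∀ h : Fin n → 𝓞 K, (∀ i, gbf c (W i) h = 0) → h = 0 := by
  classical
  obtain ⟨d, hd, hint⟩ := exists_integral_multiples ℤ ℚ
    (Finset.univ.image fun p : Fin n × Fin n => v p.1 p.2)
  let W : Fin n → Fin n → 𝓞 K := fun i j => ⟨d • v i j, (mem_integralClosure_iff ℤ K).mpr <|
    hint _ (Finset.mem_image_of_mem _ (Finset.mem_univ (i, j)))⟩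
  have hWv : ∀ i, (fun j => algebraMap (𝓞 K) K (W i j)) = d • v i := fun _ => rfl
  refine ⟨W, fun h hWh => ?_⟩
  have hv : ∀ i, gbfK c (v i) (fun j => algebraMap (𝓞 K) K (h j)) = 0 := by
    intro i
    have hdv := algebraMap_gbf (c := c) (W i) h
    rw [hWh i, map_zero, hWv, gbfK_zsmul_left] at hdv
    exact (smul_eq_zero.mp hdv.symm).resolve_left hd
  funext j
  exact RingOfIntegers.coe_injective (congrFun (hadm _ hv) j)

variable (c) in
noncomputable def twoGbfHom (W : Fin n → Fin n → 𝓞 K) : (Fin n → 𝓞 K) →+ (Fin n → 𝓞 K) :=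
  AddMonoidHom.pi fun i =>
    AddMonoidHom.mk' (fun h => 2 * gbf c (W i) h) fun x y => by rw [gbf_add_right, mul_add]

lemma twoGbfHom_injective {W : Fin n → Fin n → 𝓞 K}
    (hW : ∀ h : Fin n → 𝓞 K, (∀ i, gbf c (W i) h = 0) → h = 0) :
    Function.Injective (twoGbfHom c W) :=
  (injective_iff_map_eq_zero _).mpr fun h hh =>
    hW h fun i => (mul_eq_zero.mp (congrFun hh i)).resolve_left two_ne_zero

lemma Hsub_le_comap_twoGbfHom (W : Fin n → Fin n → 𝓞 K) (𝔟 : Ideal (𝓞 K)) :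
    Hsub c 𝔟 ≤ (AddSubgroup.pi Set.univ fun _ => 𝔟.toAddSubgroup).comap (twoGbfHom c W) :=
  fun _ hh i _ => hh (W i)

end

theorem relindex_H_le_of_admissible_general
    (K : Type*) [Field K] [NumberField K] (n : ℕ)
    (c : Fin n → Fin n → (K ≃ₐ[ℚ] K) → (K ≃ₐ[ℚ] K) → 𝓞 K)
    (G : Set (K ≃ₐ[ℚ] K))
    (hG : ∀ i j τ τ', c i j τ τ' ≠ 0 → τ ∈ G ∧ τ' ∈ G)
    (v : Fin n → Fin n → K)
    (hadm : ∀ h : Fin n → K, (∀ i, gbfK c (v i) h = 0) → h = 0) :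
    ∃ C₂ : ℕ, 0 < C₂ ∧
      ∀ 𝔟 : Ideal (𝓞 K), 𝔟 ≠ ⊥ →
        (GIdealPow n G 𝔟).relIndex (Hsub c 𝔟) * Ideal.absNorm 𝔟 ^ n ≤
          C₂ * Ideal.absNorm (GIdeal G 𝔟) ^ n := by
  obtain ⟨W, hW⟩ := exists_integral_vectors_of_admissible hadm
  set L := twoGbfHom c W
  have hL : L.range.index ≠ 0 :=
    AddMonoidHom.index_range_ne_zero_of_injective (twoGbfHom_injective hW)
  refine ⟨L.range.index, Nat.pos_of_ne_zero hL, fun 𝔟 h𝔟 => Nat.le_of_dvd ?_ ?_⟩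
  · exact Nat.pos_of_ne_zero <| mul_ne_zero hL <| pow_ne_zero _ <|
      Ideal.absNorm_eq_zero_iff.not.mpr (GIdeal_ne_bot G h𝔟)
  have hle := GIdealPow_le_Hsub (fun i j τ τ' hc => (hG i j τ τ' hc).2) 𝔟
  calc (GIdealPow n G 𝔟).relIndex (Hsub c 𝔟) * Ideal.absNorm 𝔟 ^ n
      = (GIdealPow n G 𝔟).relIndex (Hsub c 𝔟) *
          (AddSubgroup.pi Set.univ fun _ : Fin n => 𝔟.toAddSubgroup).index := by
        rw [Ideal.index_pi_toAddSubgroup, Fintype.card_fin]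
    _ ∣ (GIdealPow n G 𝔟).relIndex (Hsub c 𝔟) * ((Hsub c 𝔟).index * L.range.index) :=
        mul_dvd_mul_left _ <| (AddSubgroup.index_dvd_index_comap_mul_index_range L _).trans <|
          mul_dvd_mul_right (AddSubgroup.index_dvd_of_le (Hsub_le_comap_twoGbfHom W 𝔟)) _
    _ = L.range.index * (GIdealPow n G 𝔟).index := by
        rw [← AddSubgroup.relIndex_mul_index hle]; ring
    _ = L.range.index * Ideal.absNorm (GIdeal G 𝔟) ^ n := by
        rw [GIdealPow, Ideal.index_pi_toAddSubgroup, Fintype.card_fin]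

/-- Let `F` be an admissible generalised quadratic form over
`𝓞 K`, i.e. there are `v₁, …, vₙ ∈ Kⁿ` such that `B(vᵢ; h) = 0` for all `i`
forces `h = 0`.  Then there is a constant `C₂ > 0`, depending only on `F`,
such that `|ℋ_𝔟/(ᴳ𝔟)ⁿ| ≤ C₂ · (N ᴳ𝔟)ⁿ/(N𝔟)ⁿ` for every non-zero integral
ideal `𝔟` (stated multiplied out:
`|ℋ_𝔟/(ᴳ𝔟)ⁿ| · (N𝔟)ⁿ ≤ C₂ · (N ᴳ𝔟)ⁿ`). -/
theorem relindex_H_le_of_admissible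
    (K : Type*) [Field K] [NumberField K] [IsGalois ℚ K] (n : ℕ)
    (c : Fin n → Fin n → (K ≃ₐ[ℚ] K) → (K ≃ₐ[ℚ] K) → 𝓞 K)
    (hsym : ∀ i j τ τ', c i j τ τ' = c j i τ' τ)
    (G : Set (K ≃ₐ[ℚ] K))
    (hG : ∀ i j τ τ', c i j τ τ' ≠ 0 → τ ∈ G ∧ τ' ∈ G)
    (v : Fin n → Fin n → K)
    (hadm : ∀ h : Fin n → K, (∀ i, gbfK c (v i) h = 0) → h = 0) :
    ∃ C₂ : ℕ, 0 < C₂ ∧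
      ∀ 𝔟 : Ideal (𝓞 K), 𝔟 ≠ ⊥ →
        (GIdealPow n G 𝔟).relIndex (Hsub c 𝔟) * Ideal.absNorm 𝔟 ^ n ≤
          C₂ * Ideal.absNorm (GIdeal G 𝔟) ^ n :=
  relindex_H_le_of_admissible_general K n c G hG v hadm
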